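/- Lemma 5.1 (fully discrete necessity): Let D ⊆ ℂ be open with D + 1 = D. For each ν ∈ ℤ let τ(·,ν) : D → ℂ be holomorphic, and let η(ν) ∈ D satisfy τ(η(ν),ν) = 0, ∂_xτ(η(ν),ν) ≠ 0, τ(η(ν)+1,ν−1)·τ(η(ν)−1,ν−1) ≠ 0, and also τ(η(ν)+1,ν+1), τ(η(ν)−1,ν+1), τ(η(ν)+2,ν), τ(η(ν)−2,ν) all nonzero. Set u(x,ν) = τ(x,ν+1)·τ(x,ν−1)/[τ(x−1,ν)·τ(x+1,ν)]. Suppose that for each ν there is a function ψ(·,ν), meromorphic on D, holomorphic except for a simple pole with nonzero residue at x = η(ν), in particular holomorphic at η(ν+1)−1 and η(ν+1)+1, which satisfies ψ(x−1,ν) = ψ(x+1,ν) + u(x,ν)·ψ(x,ν−1) wherever all terms are defined. Then for every ν, writing η = η(ν), one has τ(η+1,ν+1)·τ(η−2,ν)·τ(η+1,ν−1) + τ(η−1,ν+1)·τ(η+2,ν)·τ(η−1,ν−1) = 0. -/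

import Mathlib

open Filter Topology

/-!
Fix `ν` and write `η = η(ν)`. Near `x = η + 1` the left side `ψ(x - 1, ν)` of the linear problem
has the simple pole of `ψ(·, ν)` at `η`, and on the right side only `u(x, ν)` can produce it, through
the simple zero of `τ(x - 1, ν)`; comparing residues expresses `α(ν)` through `ψ(η + 1, ν - 1)`.
Near `x = η - 1` the pole sits in `ψ(x + 1, ν)` instead and `u(x, ν)` has to cancel it, which
expresses `-α(ν)` through `ψ(η - 1, ν - 1)`. At `x = η` the zero of `τ(η, ν)` kills the `u`-term of
the equation at level `ν - 1`, so `ψ(η - 1, ν - 1) = ψ(η + 1, ν - 1)`; this common value is nonzero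
since `α(ν) ≠ 0`, and eliminating it from the two residue relations gives the bilinear identity.
-/

section Residues

variable {f g Q t : ℂ → ℂ} {a : ℂ}

theorem eventually_add_ne_nhdsNE (a c b : ℂ) : ∀ᶠ y in 𝓝[≠] a, y + c ≠ b :=
  ((hasDerivAt_id a).add_const c).eventually_ne one_ne_zero

theorem ContinuousAt.tendsto_sub_mul_nhdsNE_zero (hg : ContinuousAt g a) :
    Tendsto (fun y => (y - a) * g y) (𝓝[≠] a) (𝓝 0) := by
  have : ContinuousAt (fun y => (y - a) * g y) a :=
    (continuousAt_id.sub continuousAt_const).mul hg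
  simpa using this.tendsto.mono_left nhdsWithin_le_nhds

theorem tendsto_sub_mul_of_eventually_eq_div_add {ρ : ℂ → ℂ} {α : ℂ} (hρ : ContinuousAt ρ a)
    (hf : ∀ᶠ y in 𝓝[≠] a, f y = α / (y - a) + ρ y) :
    Tendsto (fun y => (y - a) * f y) (𝓝[≠] a) (𝓝 α) := by
  have : Tendsto (fun y => α + (y - a) * ρ y) (𝓝[≠] a) (𝓝 (α + 0)) :=
    tendsto_const_nhds.add hρ.tendsto_sub_mul_nhdsNE_zero
  rw [add_zero] at this
  refine this.congr' ?_
  filter_upwards [hf, self_mem_nhdsWithin] with y hy hne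
  rw [hy, mul_add, mul_div_cancel₀ _ (sub_ne_zero.2 hne)]

variable {t' : ℂ}

theorem HasDerivAt.tendsto_div_sub_nhdsNE (ht : HasDerivAt t t' a) (ha : t a = 0) :
    Tendsto (fun y => t y / (y - a)) (𝓝[≠] a) (𝓝 t') :=
  (hasDerivAt_iff_tendsto_slope.1 ht).congr fun y => by rw [slope_def_field, ha, sub_zero]

theorem HasDerivAt.tendsto_sub_div_nhdsNE (ht : HasDerivAt t t' a) (ha : t a = 0)
    (ht' : t' ≠ 0) : Tendsto (fun y => (y - a) / t y) (𝓝[≠] a) (𝓝 t'⁻¹) :=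
  ((ht.tendsto_div_sub_nhdsNE ha).inv₀ ht').congr fun _ => inv_div _ _

theorem HasDerivAt.tendsto_mul_nhdsNE (ht : HasDerivAt t t' a) (ha : t a = 0) {c : ℂ}
    (hf : Tendsto (fun y => (y - a) * f y) (𝓝[≠] a) (𝓝 c)) :
    Tendsto (fun y => t y * f y) (𝓝[≠] a) (𝓝 (t' * c)) := by
  refine ((ht.tendsto_div_sub_nhdsNE ha).mul hf).congr' ?_
  filter_upwards [self_mem_nhdsWithin] with y hy
  field_simp [sub_ne_zero.2 hy]

theorem residue_eq_of_eventuallyEq_add_div (ht : HasDerivAt t t' a) (ha : t a = 0) (ht' : t' ≠ 0)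
    {A B Q₀ : ℂ} (hf : Tendsto (fun y => (y - a) * f y) (𝓝[≠] a) (𝓝 A))
    (hg : Tendsto (fun y => (y - a) * g y) (𝓝[≠] a) (𝓝 B)) (hQ : Tendsto Q (𝓝[≠] a) (𝓝 Q₀))
    (hfg : f =ᶠ[𝓝[≠] a] fun y => g y + Q y / t y) : A = B + Q₀ / t' := by
  have : Tendsto (fun y => (y - a) * g y + Q y * ((y - a) / t y)) (𝓝[≠] a)
      (𝓝 (B + Q₀ * t'⁻¹)) :=
    hg.add (hQ.mul (ht.tendsto_sub_div_nhdsNE ha ht'))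
  rw [div_eq_mul_inv]
  refine tendsto_nhds_unique hf (this.congr' ?_)
  filter_upwards [hfg] with y hy
  rw [hy]
  ring

end Residues

noncomputable def hirotaU (τ : ℂ → ℤ → ℂ) (x : ℂ) (ν : ℤ) : ℂ :=
  τ x (ν + 1) * τ x (ν - 1) / (τ (x - 1) ν * τ (x + 1) ν)

def SolvesLinearProblem (D : Set ℂ) (τ : ℂ → ℤ → ℂ) (η : ℤ → ℂ) (ψ : ℂ → ℤ → ℂ) : Prop :=
  ∀ ν : ℤ, ∀ x ∈ D, τ (x - 1) ν ≠ 0 → τ (x + 1) ν ≠ 0 →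
    x - 1 ≠ η ν → x + 1 ≠ η ν → x ≠ η (ν - 1) →
    ψ (x - 1) ν = ψ (x + 1) ν + hirotaU τ x ν * ψ x (ν - 1)

section Hirota

variable {D : Set ℂ} {τ ψ : ℂ → ℤ → ℂ} {η : ℤ → ℂ}

theorem continuousAt_comp_of_differentiableOn (hD : IsOpen D)
    (hτ : ∀ μ, DifferentiableOn ℂ (fun x => τ x μ) D) {s : ℂ → ℂ} {a : ℂ} {μ : ℤ}
    (hs : ContinuousAt s a) (hsa : s a ∈ D) : ContinuousAt (fun y => τ (s y) μ) a :=
  ((hτ μ).continuousOn.continuousAt (hD.mem_nhds hsa)).comp hs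

theorem continuousAt_comp_of_ne_zero
    (hψ : ∀ μ, ∀ x ∈ D, x ≠ η μ → AnalyticAt ℂ (fun y => ψ y μ) x)
    (hτη : ∀ μ, τ (η μ) μ = 0) {s : ℂ → ℂ} {a : ℂ} {μ : ℤ} (hs : ContinuousAt s a)
    (hsa : s a ∈ D) (hτs : τ (s a) μ ≠ 0) : ContinuousAt (fun y => ψ (s y) μ) a :=
  (hψ μ (s a) hsa fun h => hτs (h ▸ hτη μ)).continuousAt.comp hs

theorem SolvesLinearProblem.eventually_add (h : SolvesLinearProblem D τ η ψ) (hD : IsOpen D)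
    {a c : ℂ} {μ : ℤ} (hac : a + c ∈ D) (hsub : ∀ᶠ y in 𝓝[≠] a, τ (y + c - 1) μ ≠ 0)
    (hadd : ∀ᶠ y in 𝓝[≠] a, τ (y + c + 1) μ ≠ 0) :
    ∀ᶠ y in 𝓝[≠] a,
      ψ (y + c - 1) μ = ψ (y + c + 1) μ + hirotaU τ (y + c) μ * ψ (y + c) (μ - 1) := by
  have hmem : ∀ᶠ y in 𝓝[≠] a, y + c ∈ D :=
    ((continuous_add_const c).continuousAt.eventually_mem (hD.mem_nhds hac)).filter_mono
      nhdsWithin_le_nhds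
  filter_upwards [hmem, hsub, hadd, eventually_add_ne_nhdsNE a (c - 1) (η μ),
    eventually_add_ne_nhdsNE a (c + 1) (η μ), eventually_add_ne_nhdsNE a c (η (μ - 1))]
    with y hD hτsub hτadd hηsub hηadd hη
  rw [← add_sub_assoc] at hηsub
  rw [← add_assoc] at hηadd
  exact h μ (y + c) hD hτsub hτadd hηsub hηadd hη

theorem exists_tendsto_mul_nhdsNE (hD : IsOpen D)
    (hτ : ∀ μ, DifferentiableOn ℂ (fun x => τ x μ) D) (hτη : ∀ μ, τ (η μ) μ = 0)
    (hψ : ∀ μ, ∀ x ∈ D, x ≠ η μ → AnalyticAt ℂ (fun y => ψ y μ) x) {α : ℤ → ℂ}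
    (hpole : ∀ μ, ∃ ρ : ℂ → ℂ, AnalyticAt ℂ ρ (η μ) ∧
      ∀ᶠ x in 𝓝[≠] η μ, ψ x μ = α μ / (x - η μ) + ρ x)
    {a : ℂ} (ha : a ∈ D) (μ : ℤ) :
    ∃ L, Tendsto (fun y => τ y μ * ψ y μ) (𝓝[≠] a) (𝓝 L) := by
  have hτa : ContinuousAt (fun y => τ y μ) a :=
    continuousAt_comp_of_differentiableOn hD hτ continuousAt_id ha
  by_cases haη : a = η μ
  · subst haη
    obtain ⟨ρ, hρ, hψρ⟩ := hpole μ
    have ht := ((hτ μ).differentiableAt (hD.mem_nhds ha)).hasDerivAt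
    exact ⟨_, ht.tendsto_mul_nhdsNE (hτη μ)
      (tendsto_sub_mul_of_eventually_eq_div_add hρ.continuousAt hψρ)⟩
  · exact ⟨_, (hτa.mul (hψ μ a ha haη).continuousAt).tendsto.mono_left nhdsWithin_le_nhds⟩

theorem SolvesLinearProblem.residue_eq_at_add_one (h : SolvesLinearProblem D τ η ψ)
    (hD : IsOpen D) (hDshift : ∀ x : ℂ, x ∈ D ↔ x + 1 ∈ D)
    (hτ : ∀ μ, DifferentiableOn ℂ (fun x => τ x μ) D) (hτη : ∀ μ, τ (η μ) μ = 0)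
    (hψ : ∀ μ, ∀ x ∈ D, x ≠ η μ → AnalyticAt ℂ (fun y => ψ y μ) x)
    {a α : ℂ} {ν : ℤ} (ha : a ∈ D) (hτa : τ a ν = 0) (hderiv : deriv (fun x => τ x ν) a ≠ 0)
    (hres : Tendsto (fun y => (y - a) * ψ y ν) (𝓝[≠] a) (𝓝 α))
    (hτ₁ : τ (a + 1) (ν - 1) ≠ 0) (hτ₂ : τ (a + 2) ν ≠ 0) :
    α = τ (a + 1) (ν + 1) * τ (a + 1) (ν - 1) * ψ (a + 1) (ν - 1) / τ (a + 2) ν /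
      deriv (fun x => τ x ν) a := by
  have ha₁ : a + 1 ∈ D := (hDshift a).1 ha
  have ha₂ : a + 2 ∈ D := by
    simpa only [add_assoc, one_add_one_eq_two] using (hDshift _).1 ha₁
  have ht := ((hτ ν).differentiableAt (hD.mem_nhds ha)).hasDerivAt
  have hτ₂cont : ContinuousAt (fun y => τ (y + 2) ν) a :=
    continuousAt_comp_of_differentiableOn hD hτ (by fun_prop) ha₂
  have hτ₂ev : ∀ᶠ y in 𝓝[≠] a, τ (y + 2) ν ≠ 0 :=
    (hτ₂cont.eventually_ne hτ₂).filter_mono nhdsWithin_le_nhds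
  have hrec := h.eventually_add hD ha₁ (by simpa using ht.eventually_ne (c := 0) hderiv)
    (by simpa only [add_assoc, one_add_one_eq_two] using hτ₂ev)
  have hψ₂ : ContinuousAt (fun y => ψ (y + 2) ν) a :=
    continuousAt_comp_of_ne_zero hψ hτη (by fun_prop) ha₂ hτ₂
  have hQ : ContinuousAt (fun y => τ (y + 1) (ν + 1) * τ (y + 1) (ν - 1) * ψ (y + 1) (ν - 1) /
      τ (y + 2) ν) a := by
    refine ContinuousAt.div (ContinuousAt.mul (ContinuousAt.mul ?_ ?_) ?_) hτ₂cont hτ₂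
    · exact continuousAt_comp_of_differentiableOn hD hτ (by fun_prop) ha₁
    · exact continuousAt_comp_of_differentiableOn hD hτ (by fun_prop) ha₁
    · exact continuousAt_comp_of_ne_zero hψ hτη (by fun_prop) ha₁ hτ₁
  have := residue_eq_of_eventuallyEq_add_div ht hτa hderiv hres
    hψ₂.tendsto_sub_mul_nhdsNE_zero (hQ.tendsto.mono_left nhdsWithin_le_nhds) ?_
  · rwa [zero_add] at this
  filter_upwards [hrec] with y hy
  rw [add_sub_cancel_right, add_assoc, one_add_one_eq_two] at hy
  rw [hy, hirotaU, add_sub_cancel_right, add_assoc, one_add_one_eq_two]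
  ring

theorem SolvesLinearProblem.residue_eq_at_sub_one (h : SolvesLinearProblem D τ η ψ)
    (hD : IsOpen D) (hDshift : ∀ x : ℂ, x ∈ D ↔ x + 1 ∈ D)
    (hτ : ∀ μ, DifferentiableOn ℂ (fun x => τ x μ) D) (hτη : ∀ μ, τ (η μ) μ = 0)
    (hψ : ∀ μ, ∀ x ∈ D, x ≠ η μ → AnalyticAt ℂ (fun y => ψ y μ) x)
    {a α : ℂ} {ν : ℤ} (ha : a ∈ D) (hτa : τ a ν = 0) (hderiv : deriv (fun x => τ x ν) a ≠ 0)
    (hres : Tendsto (fun y => (y - a) * ψ y ν) (𝓝[≠] a) (𝓝 α))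
    (hτ₁ : τ (a - 1) (ν - 1) ≠ 0) (hτ₂ : τ (a - 2) ν ≠ 0) :
    0 = α + τ (a - 1) (ν + 1) * τ (a - 1) (ν - 1) * ψ (a - 1) (ν - 1) / τ (a - 2) ν /
      deriv (fun x => τ x ν) a := by
  have ha₁ : a - 1 ∈ D := (hDshift _).2 (by rwa [sub_add_cancel])
  have ha₂ : a - 2 ∈ D := (hDshift _).2 (by rwa [show a - 2 + 1 = a - 1 by ring])
  have ht := ((hτ ν).differentiableAt (hD.mem_nhds ha)).hasDerivAt
  have hτ₂cont : ContinuousAt (fun y => τ (y - 2) ν) a :=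
    continuousAt_comp_of_differentiableOn hD hτ (by fun_prop) ha₂
  have hτ₂ev : ∀ᶠ y in 𝓝[≠] a, τ (y - 2) ν ≠ 0 :=
    (hτ₂cont.eventually_ne hτ₂).filter_mono nhdsWithin_le_nhds
  have hrec := h.eventually_add hD (a := a) (c := -1) (μ := ν) (by rwa [← sub_eq_add_neg])
    (by simpa only [← sub_eq_add_neg, sub_sub, one_add_one_eq_two] using hτ₂ev)
    (by simpa using ht.eventually_ne (c := 0) hderiv)
  have hψ₂ : ContinuousAt (fun y => ψ (y - 2) ν) a :=
    continuousAt_comp_of_ne_zero hψ hτη (by fun_prop) ha₂ hτ₂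
  have hQ : ContinuousAt (fun y => τ (y - 1) (ν + 1) * τ (y - 1) (ν - 1) * ψ (y - 1) (ν - 1) /
      τ (y - 2) ν) a := by
    refine ContinuousAt.div (ContinuousAt.mul (ContinuousAt.mul ?_ ?_) ?_) hτ₂cont hτ₂
    · exact continuousAt_comp_of_differentiableOn hD hτ (by fun_prop) ha₁
    · exact continuousAt_comp_of_differentiableOn hD hτ (by fun_prop) ha₁
    · exact continuousAt_comp_of_ne_zero hψ hτη (by fun_prop) ha₁ hτ₁
  refine residue_eq_of_eventuallyEq_add_div ht hτa hderiv hψ₂.tendsto_sub_mul_nhdsNE_zero hres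
    (hQ.tendsto.mono_left nhdsWithin_le_nhds) ?_
  filter_upwards [hrec] with y hy
  simp only [← sub_eq_add_neg, sub_add_cancel, sub_sub, one_add_one_eq_two] at hy
  rw [hy, hirotaU, sub_add_cancel, sub_sub, one_add_one_eq_two]
  ring

theorem SolvesLinearProblem.psi_sub_one_eq_psi_add_one (h : SolvesLinearProblem D τ η ψ)
    (hD : IsOpen D) (hDshift : ∀ x : ℂ, x ∈ D ↔ x + 1 ∈ D)
    (hτ : ∀ μ, DifferentiableOn ℂ (fun x => τ x μ) D) (hτη : ∀ μ, τ (η μ) μ = 0)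
    (hψ : ∀ μ, ∀ x ∈ D, x ≠ η μ → AnalyticAt ℂ (fun y => ψ y μ) x) {α : ℤ → ℂ}
    (hpole : ∀ μ, ∃ ρ : ℂ → ℂ, AnalyticAt ℂ ρ (η μ) ∧
      ∀ᶠ x in 𝓝[≠] η μ, ψ x μ = α μ / (x - η μ) + ρ x)
    {a : ℂ} {ν : ℤ} (ha : a ∈ D) (hτa : τ a ν = 0)
    (hτsub : τ (a - 1) (ν - 1) ≠ 0) (hτadd : τ (a + 1) (ν - 1) ≠ 0) :
    ψ (a - 1) (ν - 1) = ψ (a + 1) (ν - 1) := by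
  have hasub : a - 1 ∈ D := (hDshift _).2 (by rwa [sub_add_cancel])
  have haadd : a + 1 ∈ D := (hDshift a).1 ha
  have hτν : ContinuousAt (fun y => τ y ν) a :=
    continuousAt_comp_of_differentiableOn hD hτ continuousAt_id ha
  have hτsub' : ContinuousAt (fun y => τ (y - 1) (ν - 1)) a :=
    continuousAt_comp_of_differentiableOn hD hτ (by fun_prop) hasub
  have hτadd' : ContinuousAt (fun y => τ (y + 1) (ν - 1)) a :=
    continuousAt_comp_of_differentiableOn hD hτ (by fun_prop) haadd
  have hψsub : ContinuousAt (fun y => ψ (y - 1) (ν - 1)) a :=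
    continuousAt_comp_of_ne_zero hψ hτη (by fun_prop) hasub hτsub
  have hψadd : ContinuousAt (fun y => ψ (y + 1) (ν - 1)) a :=
    continuousAt_comp_of_ne_zero hψ hτη (by fun_prop) haadd hτadd
  have hrec := h.eventually_add hD (a := a) (c := 0) (μ := ν - 1) (by rwa [add_zero])
    (by simpa using (hτsub'.eventually_ne hτsub).filter_mono nhdsWithin_le_nhds)
    (by simpa using (hτadd'.eventually_ne hτadd).filter_mono nhdsWithin_le_nhds)
  -- the zero of `τ(·, ν)` at `a` cancels the at most simple pole of `ψ(·, ν - 2)` there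
  obtain ⟨L, hL⟩ := exists_tendsto_mul_nhdsNE hD hτ hτη hψ hpole ha (ν - 1 - 1)
  have hlim := (hψadd.tendsto.mono_left nhdsWithin_le_nhds).add
    (((hτν.tendsto.mono_left nhdsWithin_le_nhds).mul hL).div
      ((hτsub'.mul hτadd').tendsto.mono_left nhdsWithin_le_nhds) (mul_ne_zero hτsub hτadd))
  rw [hτa, zero_mul, zero_div, add_zero] at hlim
  refine tendsto_nhds_unique (hψsub.tendsto.mono_left nhdsWithin_le_nhds) (hlim.congr' ?_)
  filter_upwards [hrec] with y hy
  simp only [add_zero] at hy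
  rw [hy, hirotaU, sub_add_cancel, Pi.div_apply, Pi.mul_apply]
  ring

end Hirota

theorem lemma51_necessity_general (D : Set ℂ) (hD : IsOpen D)
    (hDshift : ∀ x : ℂ, x ∈ D ↔ x + 1 ∈ D)
    (τ : ℂ → ℤ → ℂ)
    (hτx : ∀ ν : ℤ, DifferentiableOn ℂ (fun x => τ x ν) D)
    (η : ℤ → ℂ) (hηD : ∀ ν, η ν ∈ D)
    (hτη : ∀ ν, τ (η ν) ν = 0)
    (hsimple : ∀ ν, deriv (fun x => τ x ν) (η ν) ≠ 0)
    (hnz1 : ∀ ν, τ (η ν + 1) (ν - 1) * τ (η ν - 1) (ν - 1) ≠ 0)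
    (hnz4 : ∀ ν, τ (η ν + 2) ν ≠ 0)
    (hnz5 : ∀ ν, τ (η ν - 2) ν ≠ 0)
    (ψ : ℂ → ℤ → ℂ) (α : ℤ → ℂ)
    (hα : ∀ ν, α ν ≠ 0)
    -- ψ(·,ν) is holomorphic on D away from its unique (simple) pole η(ν)
    (hψreg : ∀ ν, ∀ x ∈ D, x ≠ η ν → AnalyticAt ℂ (fun y => ψ y ν) x)
    -- simple pole at η(ν) with residue α(ν)
    (hψpole : ∀ ν, ∃ ρ : ℂ → ℂ, AnalyticAt ℂ ρ (η ν) ∧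
      ∀ᶠ x in nhdsWithin (η ν) {η ν}ᶜ, ψ x ν = α ν / (x - η ν) + ρ x)
    -- the equation ψ(x−1,ν) = ψ(x+1,ν) + u(x,ν)ψ(x,ν−1) wherever all terms are defined
    (heq : ∀ ν : ℤ, ∀ x ∈ D,
      τ (x - 1) ν ≠ 0 → τ (x + 1) ν ≠ 0 →
      x - 1 ≠ η ν → x + 1 ≠ η ν → x ≠ η (ν - 1) →
      ψ (x - 1) ν = ψ (x + 1) ν +
        (τ x (ν + 1) * τ x (ν - 1) / (τ (x - 1) ν * τ (x + 1) ν)) * ψ x (ν - 1)) :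
    ∀ ν : ℤ,
      τ (η ν + 1) (ν + 1) * τ (η ν - 2) ν * τ (η ν + 1) (ν - 1) +
        τ (η ν - 1) (ν + 1) * τ (η ν + 2) ν * τ (η ν - 1) (ν - 1) = 0 := by
  intro ν
  have hlin : SolvesLinearProblem D τ η ψ := heq
  obtain ⟨hτadd, hτsub⟩ := mul_ne_zero_iff.1 (hnz1 ν)
  obtain ⟨ρ, hρ, hψρ⟩ := hψpole ν
  have hres := tendsto_sub_mul_of_eventually_eq_div_add hρ.continuousAt hψρ
  have hresAdd := hlin.residue_eq_at_add_one hD hDshift hτx hτη hψreg (hηD ν) (hτη ν) (hsimple ν)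
    hres hτadd (hnz4 ν)
  have hresSub := hlin.residue_eq_at_sub_one hD hDshift hτx hτη hψreg (hηD ν) (hτη ν) (hsimple ν)
    hres hτsub (hnz5 ν)
  have hψeq := hlin.psi_sub_one_eq_psi_add_one hD hDshift hτx hτη hψreg hψpole (hηD ν) (hτη ν)
    hτsub hτadd
  rw [hψeq, hresAdd] at hresSub
  have hw : ψ (η ν + 1) (ν - 1) ≠ 0 := fun hw => hα ν (by simpa [hw] using hresAdd)
  field_simp [hsimple ν, hnz4 ν, hnz5 ν] at hresSub
  refine (mul_eq_zero.1 ?_).resolve_left hw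
  linear_combination -hresSub

/-- Lemma 5.1: fully discrete necessity. -/
theorem lemma51_necessity (D : Set ℂ) (hD : IsOpen D)
    (hDshift : ∀ x : ℂ, x ∈ D ↔ x + 1 ∈ D)
    (τ : ℂ → ℤ → ℂ)
    (hτx : ∀ ν : ℤ, DifferentiableOn ℂ (fun x => τ x ν) D)
    (η : ℤ → ℂ) (hηD : ∀ ν, η ν ∈ D)
    (hτη : ∀ ν, τ (η ν) ν = 0)
    (hsimple : ∀ ν, deriv (fun x => τ x ν) (η ν) ≠ 0)
    (hnz1 : ∀ ν, τ (η ν + 1) (ν - 1) * τ (η ν - 1) (ν - 1) ≠ 0)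
    (hnz2 : ∀ ν, τ (η ν + 1) (ν + 1) ≠ 0)
    (hnz3 : ∀ ν, τ (η ν - 1) (ν + 1) ≠ 0)
    (hnz4 : ∀ ν, τ (η ν + 2) ν ≠ 0)
    (hnz5 : ∀ ν, τ (η ν - 2) ν ≠ 0)
    (ψ : ℂ → ℤ → ℂ) (α : ℤ → ℂ)
    (hα : ∀ ν, α ν ≠ 0)
    -- ψ(·,ν) is holomorphic on D away from its unique (simple) pole η(ν)
    (hψreg : ∀ ν, ∀ x ∈ D, x ≠ η ν → AnalyticAt ℂ (fun y => ψ y ν) x)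
    -- simple pole at η(ν) with residue α(ν)
    (hψpole : ∀ ν, ∃ ρ : ℂ → ℂ, AnalyticAt ℂ ρ (η ν) ∧
      ∀ᶠ x in nhdsWithin (η ν) {η ν}ᶜ, ψ x ν = α ν / (x - η ν) + ρ x)
    -- the equation ψ(x−1,ν) = ψ(x+1,ν) + u(x,ν)ψ(x,ν−1) wherever all terms are defined
    (heq : ∀ ν : ℤ, ∀ x ∈ D,
      τ (x - 1) ν ≠ 0 → τ (x + 1) ν ≠ 0 →
      x - 1 ≠ η ν → x + 1 ≠ η ν → x ≠ η (ν - 1) →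
      ψ (x - 1) ν = ψ (x + 1) ν +
        (τ x (ν + 1) * τ x (ν - 1) / (τ (x - 1) ν * τ (x + 1) ν)) * ψ x (ν - 1)) :
    ∀ ν : ℤ,
      τ (η ν + 1) (ν + 1) * τ (η ν - 2) ν * τ (η ν + 1) (ν - 1) +
        τ (η ν - 1) (ν + 1) * τ (η ν + 2) ν * τ (η ν - 1) (ν - 1) = 0 :=
  lemma51_necessity_general D hD hDshift τ hτx η hηD hτη hsimple hnz1 hnz4 hnz5 ψ α hα hψreg hψpole
    heq
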